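/- For every cube Q in ℝⁿ (a product of n intervals of equal length), there exists a shifted dyadic cube Q' (i.e., a cube of the form 2^j(k + (0,1)^n + (-1)^j σ) for some j ∈ ℤ, k ∈ ℤⁿ, σ ∈ {0, 1/3, 2/3}ⁿ) such that Q is contained in the cube with the same center as Q' and 7/10 of its side length, and the volumes satisfy |Q'| ≤ C|Q| and |Q| ≤ C|Q'| for an absolute constant C. -/

import Mathlib

open Set

/-- The open cube in `ℝⁿ` with center `c` and side length `ℓ`. -/
def cube (n : ℕ) (c : Fin n → ℝ) (ℓ : ℝ) : Set (Fin n → ℝ) :=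
  {x | ∀ i, |x i - c i| < ℓ / 2}

/-- Center of the shifted dyadic cube `2^j (k + (0,1)^n + (-1)^j σ)`. -/
noncomputable def sdcCenter (n : ℕ) (j : ℤ) (k : Fin n → ℤ) (σ : Fin n → ℝ) : Fin n → ℝ :=
  fun i => (2 : ℝ) ^ j * ((k i : ℝ) + 1 / 2 + (-1 : ℝ) ^ j * σ i)

/-!
Take an even `j` with `10 ℓ ≤ 2^j < 40 ℓ`. For even `j` the centers of the shifted dyadic cubes
of side `2^j` are the points `2^j (t / 3 + 1 / 2)`, `t ∈ ℤⁿ` (write `t = 3 k + 3 σ`), a grid of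
mesh `2^j / 3`, so some center lies within `2^j / 6` of the center of `Q` in every coordinate.
As `ℓ / 2 + 2^j / 6 ≤ 2^j / 20 + 2^j / 6 < (7 / 20) 2^j`, the cube `Q` lies in `(7/10) Q'`.
-/

lemma cube_subset_cube {n : ℕ} {c c' : Fin n → ℝ} {ℓ ℓ' : ℝ}
    (h : ∀ i, |c i - c' i| + ℓ / 2 ≤ ℓ' / 2) : cube n c ℓ ⊆ cube n c' ℓ' := fun x hx i =>
  calc |x i - c' i| ≤ |x i - c i| + |c i - c' i| := abs_sub_le _ _ _
    _ < ℓ' / 2 := by linarith [hx i, h i]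

lemma sdcCenter_of_even {n : ℕ} {j : ℤ} (hj : Even j) (k : Fin n → ℤ) (σ : Fin n → ℝ)
    (i : Fin n) : sdcCenter n j k σ i = (2 : ℝ) ^ j * ((k i : ℝ) + σ i + 1 / 2) := by
  rw [sdcCenter, hj.neg_one_zpow]
  ring

lemma exists_even_zpow_two_mem_Ico {x : ℝ} (hx : 0 < x) :
    ∃ j : ℤ, Even j ∧ x ≤ (2 : ℝ) ^ j ∧ (2 : ℝ) ^ j < 4 * x := by
  refine ⟨2 * Int.clog 4 x, even_two_mul _, ?_⟩
  have hlow : x ≤ (4 : ℝ) ^ Int.clog 4 x := by exact_mod_cast Int.self_le_zpow_clog (by norm_num) x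
  have hhigh : (4 : ℝ) ^ (Int.clog 4 x - 1) < x := by
    exact_mod_cast Int.zpow_pred_clog_lt_self (by norm_num) hx
  have hpow : (2 : ℝ) ^ (2 * Int.clog 4 x) = 4 ^ Int.clog 4 x := by
    rw [zpow_mul]
    norm_num
  rw [hpow]
  refine ⟨hlow, ?_⟩
  calc (4 : ℝ) ^ Int.clog 4 x = 4 * 4 ^ (Int.clog 4 x - 1) := by
        rw [zpow_sub_one₀ (by norm_num)]
        field_simp
    _ < 4 * x := by linarith

lemma exists_int_abs_sub_mul_add_le (y a : ℝ) {h : ℝ} (hh : 0 < h) :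
    ∃ t : ℤ, |y - (h * t + a)| ≤ h / 2 := by
  refine ⟨round ((y - a) / h), ?_⟩
  have hy : y - (h * round ((y - a) / h) + a) = h * ((y - a) / h - round ((y - a) / h)) := by
    field_simp
    ring
  rw [hy, abs_mul, abs_of_pos hh]
  nlinarith [abs_sub_round ((y - a) / h)]

lemma Int.cast_ediv_add_cast_emod_div (t m : ℤ) (hm : m ≠ 0) :
    ((t / m : ℤ) : ℝ) + ((t % m : ℤ) : ℝ) / m = t / m := by
  have hm' : (m : ℝ) ≠ 0 := by exact_mod_cast hm
  field_simp
  exact_mod_cast congrArg (Int.cast (R := ℝ)) (Int.ediv_mul_add_emod t m)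

lemma Int.cast_emod_three_div_three (t : ℤ) :
    ((t % 3 : ℤ) : ℝ) / 3 = 0 ∨ ((t % 3 : ℤ) : ℝ) / 3 = 1 / 3 ∨ ((t % 3 : ℤ) : ℝ) / 3 = 2 / 3 := by
  have h0 : 0 ≤ t % 3 := Int.emod_nonneg _ (by norm_num)
  have h3 : t % 3 < 3 := Int.emod_lt_of_pos _ (by norm_num)
  interval_cases t % 3 <;> norm_num

theorem stmt0_general (n : ℕ) :
    ∃ C : ℝ, 0 < C ∧
      ∀ (c : Fin n → ℝ) (ℓ : ℝ), 0 < ℓ →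
        ∃ (j : ℤ) (k : Fin n → ℤ) (σ : Fin n → ℝ),
          (∀ i, σ i = 0 ∨ σ i = 1 / 3 ∨ σ i = 2 / 3) ∧
          cube n c ℓ ⊆ cube n (sdcCenter n j k σ) (7 / 10 * (2 : ℝ) ^ j) ∧
          ((2 : ℝ) ^ j) ^ n ≤ C * ℓ ^ n ∧ ℓ ^ n ≤ C * ((2 : ℝ) ^ j) ^ n := by
  refine ⟨40 ^ n, by positivity, fun c ℓ hℓ => ?_⟩
  obtain ⟨j, hj, hlow, hhigh⟩ := exists_even_zpow_two_mem_Ico (by positivity : 0 < 10 * ℓ)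
  have hs : (0 : ℝ) < 2 ^ j := by positivity
  choose t ht using fun i => exists_int_abs_sub_mul_add_le (c i) ((2 : ℝ) ^ j / 2)
    (by positivity : (0 : ℝ) < 2 ^ j / 3)
  refine ⟨j, fun i => t i / 3, fun i => ((t i % 3 : ℤ) : ℝ) / 3,
    fun i => Int.cast_emod_three_div_three (t i), cube_subset_cube fun i => ?_, ?_, ?_⟩
  · have hcenter : sdcCenter n j (fun i => t i / 3) (fun i => ((t i % 3 : ℤ) : ℝ) / 3) i
        = 2 ^ j / 3 * t i + 2 ^ j / 2 := by
      have hdigits := Int.cast_ediv_add_cast_emod_div (t i) 3 (by norm_num)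
      push_cast at hdigits
      rw [sdcCenter_of_even hj, hdigits]
      ring
    rw [hcenter]
    linarith [ht i]
  · calc ((2 : ℝ) ^ j) ^ n ≤ (40 * ℓ) ^ n := pow_le_pow_left₀ hs.le (by linarith) n
      _ = 40 ^ n * ℓ ^ n := mul_pow _ _ _
  · calc ℓ ^ n ≤ ((2 : ℝ) ^ j) ^ n := pow_le_pow_left₀ hℓ.le (by linarith) n
      _ ≤ 40 ^ n * ((2 : ℝ) ^ j) ^ n :=
        le_mul_of_one_le_left (by positivity) (one_le_pow₀ (by norm_num))

/-- For every cube `Q` there is a shifted dyadic cube `Q'` with `Q ⊆ (7/10)Q'`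
and `|Q'| ∼ |Q|`. -/
theorem stmt0 (n : ℕ) (hn : 0 < n) :
    ∃ C : ℝ, 0 < C ∧
      ∀ (c : Fin n → ℝ) (ℓ : ℝ), 0 < ℓ →
        ∃ (j : ℤ) (k : Fin n → ℤ) (σ : Fin n → ℝ),
          (∀ i, σ i = 0 ∨ σ i = 1 / 3 ∨ σ i = 2 / 3) ∧
          cube n c ℓ ⊆ cube n (sdcCenter n j k σ) (7 / 10 * (2 : ℝ) ^ j) ∧
          ((2 : ℝ) ^ j) ^ n ≤ C * ℓ ^ n ∧ ℓ ^ n ≤ C * ((2 : ℝ) ^ j) ^ n :=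
  stmt0_general n
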